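/- arXiv:2306.04283 — 4 statements merged into one kernel-verified Lean document; each statement's English description precedes it below -/
import Mathlib

section
/- Let μ, ν ∈ P(T^d) and let γ° ∈ Π^opt(μ,ν) be an optimal coupling for the quadratic cost. Let ψ : T^d → P(R^d) be the disintegration determined μ-almost everywhere by (π₁, π₁−π₂)_# γ°(dx,dz) = μ(dx) ψ(x,dz), where π₁, π₂ are the coordinate projections and π₁−π₂ is computed with the smallest representative in R^d. Then: (a) for every μ' ∈ P(T^d) and every coupling γ ∈ Π(μ,μ'), W₂²(μ',ν) − W₂²(μ,ν) ≤ 2 ∫_{T^d×T^d} ∫_{R^d} z·(y−x) ψ(x,dz) γ(dx,dy) + ∫_{T^d×T^d} |y−x|² γ(dx,dy); consequently (b) ψ belongs to the super-differential ∂⁺Φ(μ) of the function Φ(μ') := ½ W₂²(μ',ν). -/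
open MeasureTheory ProbabilityTheory Filter Set
open scoped RealInnerProductSpace MeasureTheory

noncomputable section

instance : Fact ((0:ℝ) < 1) := ⟨one_pos⟩

/-- `ℝ^d` with its euclidean structure. -/
abbrev Ed (d : ℕ) : Type := EuclideanSpace ℝ (Fin d)

/-- The flat torus `ℝ^d/ℤ^d`. -/
abbrev Torus (d : ℕ) : Type := Fin d → AddCircle (1 : ℝ)

/-- The space of Borel probability measures on the torus, with the weak topology. -/
abbrev PT (d : ℕ) : Type := ProbabilityMeasure (Torus d)

/-- The representative in `(-1/2, 1/2]^d ⊆ ℝ^d` (the smallest one) of the difference `a - b`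
of two points of the torus. -/
def tdiff {d : ℕ} (a b : Torus d) : Ed d :=
  (EuclideanSpace.equiv (Fin d) ℝ).symm fun i =>
    ((AddCircle.equivIoc (1:ℝ) (-(1/2)) (a i - b i) : Set.Ioc (-(1/2):ℝ) (-(1/2)+1)) : ℝ)

/-- The quotient distance on the torus (built from the euclidean norm on `ℝ^d`). -/
def tdist {d : ℕ} (a b : Torus d) : ℝ := ‖tdiff a b‖

/-- `γ` is a coupling between `μ` and `μ'`. -/
def IsCoupling {d : ℕ} (γ : Measure (Torus d × Torus d)) (μ μ' : Measure (Torus d)) : Prop :=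
  γ.map Prod.fst = μ ∧ γ.map Prod.snd = μ'

/-- The quadratic transport cost `∫ |y-x|² γ(dx,dy)` of a coupling. -/
def cost2 {d : ℕ} (γ : Measure (Torus d × Torus d)) : ℝ :=
  ∫ p, ‖tdiff p.2 p.1‖ ^ 2 ∂γ

/-- The squared 2-Wasserstein distance. -/
def W2sq {d : ℕ} (μ ν : Measure (Torus d)) : ℝ :=
  sInf {c | ∃ γ : Measure (Torus d × Torus d), IsCoupling γ μ ν ∧ c = cost2 γ}

/-- The 2-Wasserstein distance. -/
def W2 {d : ℕ} (μ ν : Measure (Torus d)) : ℝ := Real.sqrt (W2sq μ ν)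

/-- `γ ∈ Π^opt(μ,ν)`: optimal coupling for the quadratic cost. -/
def IsOptCoupling {d : ℕ} (γ : Measure (Torus d × Torus d)) (μ ν : Measure (Torus d)) : Prop :=
  IsCoupling γ μ ν ∧ cost2 γ = W2sq μ ν

/-- `∫∫ z·(y-x) ψ(x,dz) γ(dx,dy)`. -/
def pairing {d : ℕ} (ψ : Kernel (Torus d) (Ed d)) (γ : Measure (Torus d × Torus d)) : ℝ :=
  ∫ p, (∫ z, ⟪z, tdiff p.2 p.1⟫ ∂(ψ p.1)) ∂γ

/-- All the measures `ψ x` are supported in the closed ball of radius `C`. -/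
def BddSupp {d : ℕ} (ψ : Kernel (Torus d) (Ed d)) (C : ℝ) : Prop :=
  ∀ x, (ψ x) (Metric.closedBall (0 : Ed d) C)ᶜ = 0

/-- Pushforward of each measure `ψ x` by `-Id`. -/
def negKernel {d : ℕ} (ψ : Kernel (Torus d) (Ed d)) : Kernel (Torus d) (Ed d) :=
  ψ.map (fun z => -z)

/-- The super-differential inequality of Definition 2.3 (ε-δ form) for a function of a measure. -/
def SuperDiffIneq {d : ℕ} (U : PT d → ℝ) (μ : PT d) (ψ : Kernel (Torus d) (Ed d)) : Prop :=
  ∀ ε > (0:ℝ), ∃ δ > (0:ℝ), ∀ (μ' : PT d) (γ : Measure (Torus d × Torus d)),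
    IsCoupling γ μ μ' → cost2 γ ≤ δ ^ 2 →
    U μ' - U μ ≤ pairing ψ γ + ε * Real.sqrt (cost2 γ)

/-- `ψ ∈ ∂⁺U(μ)` : membership in the super-differential. -/
def SuperDiff {d : ℕ} (U : PT d → ℝ) (μ : PT d) (ψ : Kernel (Torus d) (Ed d)) : Prop :=
  (∃ C > (0:ℝ), ∀ᵐ x ∂(μ : Measure (Torus d)), (ψ x) (Metric.closedBall (0 : Ed d) C)ᶜ = 0) ∧
  SuperDiffIneq U μ ψ

/-! ### Auxiliary lemmas -/

section Aux

/-- The canonical representative in `Ioc (-(1/2)) (1/2)` of a point of `AddCircle 1`. -/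
def rr (c : AddCircle (1:ℝ)) : ℝ :=
  ((AddCircle.equivIoc (1:ℝ) (-(1/2)) c : Set.Ioc (-(1/2):ℝ) (-(1/2)+1)) : ℝ)

lemma tdiff_apply {d : ℕ} (a b : Torus d) (i : Fin d) : tdiff a b i = rr (a i - b i) := rfl

lemma rr_coe (c : AddCircle (1:ℝ)) : ((rr c : ℝ) : AddCircle (1:ℝ)) = c :=
  (AddCircle.equivIoc (1:ℝ) (-(1/2))).symm_apply_apply c

lemma rr_mem (c : AddCircle (1:ℝ)) : rr c ∈ Set.Ioc (-(1/2):ℝ) (1/2) := by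
  have h := (AddCircle.equivIoc (1:ℝ) (-(1/2)) c).2
  norm_num at h ⊢
  exact h

lemma abs_rr_le (c : AddCircle (1:ℝ)) : |rr c| ≤ 1/2 := by
  have h := rr_mem c
  rw [abs_le]
  constructor <;> [linarith [h.1]; exact h.2]

lemma measurable_rr : Measurable rr := by
  have : rr = fun c =>
      ((AddCircle.measurableEquivIoc (1:ℝ) (-(1/2)) c : Set.Ioc (-(1/2):ℝ) (-(1/2)+1)) : ℝ) := rfl
  rw [this]
  exact measurable_subtype_coe.comp (AddCircle.measurableEquivIoc (1:ℝ) (-(1/2))).measurable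

lemma rr_min {t : ℝ} {c : AddCircle (1:ℝ)} (h : (t : AddCircle (1:ℝ)) = c) : |rr c| ≤ |t| := by
  have hc : ((rr c : ℝ) : AddCircle (1:ℝ)) = (t : AddCircle (1:ℝ)) := by rw [rr_coe, h]
  have : ∃ k : ℤ, rr c - t = k • (1:ℝ) := by
    have h2 : rr c - t ∈ AddSubgroup.zmultiples (1:ℝ) := by
      rw [← QuotientAddGroup.eq_iff_sub_mem]
      exact hc
    obtain ⟨k, hk⟩ := AddSubgroup.mem_zmultiples_iff.mp h2
    exact ⟨k, hk.symm⟩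
  obtain ⟨k, hk⟩ := this
  rcases eq_or_ne k 0 with rfl | hk0
  · simp at hk
    have : rr c = t := by linarith
    rw [this]
  · have hk1 : (1:ℝ) ≤ |(k:ℝ)| := by exact_mod_cast Int.one_le_abs hk0
    have habs := abs_rr_le c
    have hsm : (k • (1:ℝ)) = (k:ℝ) := by simp
    rw [hsm] at hk
    have : t = rr c - k := by linarith
    rw [this]
    have : |(k:ℝ)| - |rr c| ≤ |rr c - k| := by
      have := abs_sub_abs_le_abs_sub (k:ℝ) (rr c)
      rw [abs_sub_comm] at this
      linarith
    linarith

variable {d : ℕ}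

lemma norm_le_norm_of_abs_le {u v : Ed d} (h : ∀ i, |u i| ≤ |v i|) : ‖u‖ ≤ ‖v‖ := by
  rw [EuclideanSpace.norm_eq, EuclideanSpace.norm_eq]
  apply Real.sqrt_le_sqrt
  apply Finset.sum_le_sum
  intro i _
  have := h i
  rw [Real.norm_eq_abs, Real.norm_eq_abs]
  nlinarith [abs_nonneg (u i), abs_nonneg (v i), sq_abs (u i), sq_abs (v i)]

/-- The quotient map `ℝ^d → ℝ^d/ℤ^d`. -/
def qmap (v : Ed d) : Torus d := fun i => ((v i : ℝ) : AddCircle (1:ℝ))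

lemma measurable_qmap : Measurable (qmap : Ed d → Torus d) := by
  apply measurable_pi_lambda
  intro i
  exact AddCircle.measurable_mk'.comp
    ((continuous_apply i).measurable.comp (EuclideanSpace.equiv (Fin d) ℝ).toHomeomorph.measurable)

lemma qmap_tdiff (a b : Torus d) : qmap (tdiff a b) = a - b := by
  funext i
  show ((tdiff a b i : ℝ) : AddCircle (1:ℝ)) = (a - b) i
  rw [tdiff_apply, rr_coe]
  rfl

lemma norm_tdiff_le_of_qmap {a b : Torus d} {v : Ed d} (h : qmap v = a - b) :
    ‖tdiff a b‖ ≤ ‖v‖ := by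
  apply norm_le_norm_of_abs_le
  intro i
  rw [tdiff_apply]
  apply rr_min
  have : ((v i : ℝ) : AddCircle (1:ℝ)) = (a - b) i := congrFun h i
  rw [this]; rfl

lemma qmap_neg (v : Ed d) : qmap (-v) = -(qmap v) := by
  funext i; show (((-v) i : ℝ) : AddCircle (1:ℝ)) = _
  have : (-v) i = -(v i) := rfl
  rw [this]; push_cast; rfl

lemma qmap_add (v w : Ed d) : qmap (v + w) = qmap v + qmap w := by
  funext i; show (((v+w) i : ℝ) : AddCircle (1:ℝ)) = _
  have : (v+w) i = v i + w i := rfl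
  rw [this]; push_cast; rfl

lemma norm_tdiff_symm (a b : Torus d) : ‖tdiff a b‖ = ‖tdiff b a‖ := by
  have h1 : qmap (-(tdiff b a)) = a - b := by
    rw [qmap_neg, qmap_tdiff]; abel
  have h2 : qmap (-(tdiff a b)) = b - a := by
    rw [qmap_neg, qmap_tdiff]; abel
  apply le_antisymm
  · calc ‖tdiff a b‖ ≤ ‖-(tdiff b a)‖ := norm_tdiff_le_of_qmap h1
      _ = ‖tdiff b a‖ := norm_neg _
  · calc ‖tdiff b a‖ ≤ ‖-(tdiff a b)‖ := norm_tdiff_le_of_qmap h2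
      _ = ‖tdiff a b‖ := norm_neg _

lemma sq_norm_tdiff_le (a b : Torus d) : ‖tdiff a b‖^2 ≤ d := by
  rw [EuclideanSpace.norm_eq, Real.sq_sqrt (by positivity)]
  calc (∑ i, ‖tdiff a b i‖^2) ≤ ∑ _i : Fin d, (1:ℝ) := by
        apply Finset.sum_le_sum; intro i _
        rw [Real.norm_eq_abs, tdiff_apply]
        nlinarith [abs_rr_le (a i - b i), abs_nonneg (rr (a i - b i))]
    _ = d := by simp

lemma norm_tdiff_le (a b : Torus d) : ‖tdiff a b‖ ≤ Real.sqrt d := by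
  have := sq_norm_tdiff_le a b
  nlinarith [Real.sq_sqrt (Nat.cast_nonneg (α := ℝ) d), Real.sqrt_nonneg (d:ℝ),
    norm_nonneg (tdiff a b)]

lemma measurable_tdiff : Measurable (fun p : Torus d × Torus d => tdiff p.1 p.2) := by
  apply (EuclideanSpace.equiv (Fin d) ℝ).toHomeomorph.symm.measurable.comp
  apply measurable_pi_lambda
  intro i
  exact measurable_rr.comp
    (((measurable_pi_apply i).comp measurable_fst).sub ((measurable_pi_apply i).comp measurable_snd))

lemma key_ineq (x y : Torus d) (z : Ed d) :
    ‖tdiff (x - qmap z) y‖^2 ≤ ‖tdiff y x‖^2 + 2*⟪z, tdiff y x⟫ + ‖z‖^2 := by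
  have h : qmap (-(tdiff y x + z)) = (x - qmap z) - y := by
    rw [qmap_neg, qmap_add, qmap_tdiff]; abel
  have h1 : ‖tdiff (x - qmap z) y‖ ≤ ‖tdiff y x + z‖ := by
    calc ‖tdiff (x - qmap z) y‖ ≤ ‖-(tdiff y x + z)‖ := norm_tdiff_le_of_qmap h
      _ = _ := norm_neg _
  have h2 : ‖tdiff y x + z‖^2 = ‖tdiff y x‖^2 + 2*⟪tdiff y x, z⟫ + ‖z‖^2 := norm_add_sq_real _ _
  rw [real_inner_comm]
  rw [← h2]
  nlinarith [norm_nonneg (tdiff (x - qmap z) y), norm_nonneg (tdiff y x + z)]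

lemma cost2_nonneg (γ : Measure (Torus d × Torus d)) : 0 ≤ cost2 γ :=
  integral_nonneg fun p => by positivity

lemma integrable_of_ae_bound {α : Type*} [MeasurableSpace α] {μ : Measure α} [IsFiniteMeasure μ]
    {f : α → ℝ} (hm : AEStronglyMeasurable f μ) {C : ℝ} (h : ∀ᵐ a ∂μ, ‖f a‖ ≤ C) :
    Integrable f μ :=
  ⟨hm, HasFiniteIntegral.of_bounded h⟩

lemma integral_prod_fst {α β : Type*} [MeasurableSpace α] [MeasurableSpace β]
    (m : Measure α) [SFinite m] (n : Measure β) [IsProbabilityMeasure n]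
    {h : α → ℝ} (hm : StronglyMeasurable h) :
    ∫ q, h q.1 ∂(m.prod n) = ∫ y, h y ∂m := by
  have h1 : (m.prod n).map Prod.fst = m := Measure.fst_prod
  conv_rhs => rw [← h1]
  exact (integral_map measurable_fst.aemeasurable (by rw [h1]; exact hm.aestronglyMeasurable)).symm

lemma integral_prod_snd {α β : Type*} [MeasurableSpace α] [MeasurableSpace β]
    (m : Measure α) [IsProbabilityMeasure m] (n : Measure β) [SFinite n]
    {h : β → ℝ} (hm : StronglyMeasurable h) :
    ∫ q, h q.2 ∂(m.prod n) = ∫ z, h z ∂n := by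
  have h1 : (m.prod n).map Prod.snd = n := Measure.snd_prod
  conv_rhs => rw [← h1]
  exact (integral_map measurable_snd.aemeasurable (by rw [h1]; exact hm.aestronglyMeasurable)).symm

lemma isProbabilityMeasure_of_coupling {γ : Measure (Torus d × Torus d)}
    {μ μ' : Measure (Torus d)} [IsProbabilityMeasure μ] (hc : IsCoupling γ μ μ') :
    IsProbabilityMeasure γ := by
  constructor
  have h := congrArg (fun m : Measure (Torus d) => m Set.univ) hc.1
  simp only [Measure.map_apply measurable_fst MeasurableSet.univ, Set.preimage_univ] at h
  rw [h]
  exact measure_univ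

lemma ae_supp {d : ℕ} (μ : Measure (Torus d)) [IsProbabilityMeasure μ]
    (γo : Measure (Torus d × Torus d)) [IsProbabilityMeasure γo]
    (ψ : Kernel (Torus d) (Ed d)) [IsMarkovKernel ψ]
    (hdis : γo.map (fun p : Torus d × Torus d => (p.1, tdiff p.1 p.2)) = μ ⊗ₘ ψ) :
    ∀ᵐ x ∂μ, ψ x (Metric.closedBall (0:Ed d) (Real.sqrt d))ᶜ = 0 := by
  set B := Metric.closedBall (0:Ed d) (Real.sqrt d) with hB
  have hBm : MeasurableSet Bᶜ := measurableSet_closedBall.compl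
  have hS : MeasurableSet {p : Torus d × Ed d | p.2 ∈ Bᶜ} := measurable_snd hBm
  have hg : Measurable (fun p : Torus d × Torus d => (p.1, tdiff p.1 p.2)) :=
    measurable_fst.prodMk measurable_tdiff
  have h0 : (μ ⊗ₘ ψ) {p : Torus d × Ed d | p.2 ∈ Bᶜ} = 0 := by
    rw [← hdis, Measure.map_apply hg hS]
    convert measure_empty
    · ext p
      simp only [Set.mem_preimage, Set.mem_setOf_eq, Set.mem_compl_iff, Set.mem_empty_iff_false,
        iff_false, not_not, hB, Metric.mem_closedBall, dist_zero_right]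
      exact norm_tdiff_le _ _
    · infer_instance
  rw [Measure.compProd_apply hS] at h0
  have hpre : ∀ x : Torus d, (Prod.mk x ⁻¹' {p : Torus d × Ed d | p.2 ∈ Bᶜ}) = Bᶜ := fun x => rfl
  simp only [hpre] at h0
  exact (lintegral_eq_zero_iff (ψ.measurable_coe hBm)).mp h0

end Aux

section Main

variable {d : ℕ}

set_option maxHeartbeats 1000000 in
lemma parta (μ ν μ' : Measure (Torus d)) [IsProbabilityMeasure μ] [IsProbabilityMeasure ν]
    [IsProbabilityMeasure μ'] (γo γ : Measure (Torus d × Torus d))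
    [IsProbabilityMeasure γo] [IsProbabilityMeasure γ]
    (hco : IsCoupling γo μ ν) (hc : IsCoupling γ μ μ')
    (ψ : Kernel (Torus d) (Ed d)) [IsMarkovKernel ψ]
    (hdis : γo.map (fun p : Torus d × Torus d => (p.1, tdiff p.1 p.2)) = μ ⊗ₘ ψ) :
    W2sq μ' ν ≤ cost2 γ + 2 * pairing ψ γ + cost2 γo := by
  classical
  set B := Metric.closedBall (0:Ed d) (Real.sqrt d) with hB
  have hBm : MeasurableSet Bᶜ := measurableSet_closedBall.compl
  have hsupp : ∀ᵐ x ∂μ, ψ x Bᶜ = 0 := ae_supp μ γo ψ hdis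
  have hfst : γ.fst = μ := hc.1
  set κ := γ.condKernel with hκ
  have hγ : μ ⊗ₘ κ = γ := hfst ▸ γ.disintegrate _
  set lam := μ ⊗ₘ (κ ×ₖ ψ) with hlam
  set F : Torus d × (Torus d × Ed d) → Torus d × Torus d :=
    fun p => (p.2.1, p.1 - qmap p.2.2) with hFdef
  have hF : Measurable F :=
    (measurable_snd.fst).prodMk (measurable_fst.sub (measurable_qmap.comp measurable_snd.snd))
  have hg : Measurable (fun p : Torus d × Torus d => (p.1, tdiff p.1 p.2)) :=
    measurable_fst.prodMk measurable_tdiff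
  -- the glued coupling
  have hcoup1 : (lam.map F).map Prod.fst = μ' := by
    rw [Measure.map_map measurable_fst hF]
    have hcomp : (Prod.fst ∘ F) = fun p : Torus d × (Torus d × Ed d) => p.2.1 := rfl
    rw [hcomp]
    ext s hs
    have hm21 : Measurable (fun p : Torus d × (Torus d × Ed d) => p.2.1) := measurable_snd.fst
    rw [Measure.map_apply hm21 hs, Measure.compProd_apply (hm21 hs)]
    have hpre : ∀ x : Torus d,
        (Prod.mk x ⁻¹' ((fun p : Torus d × (Torus d × Ed d) => p.2.1) ⁻¹' s))
          = s ×ˢ (Set.univ : Set (Ed d)) := by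
      intro x; ext q; simp [Set.mem_prod]
    simp only [hpre, Kernel.prod_apply, Measure.prod_prod, measure_univ, mul_one]
    -- ∫⁻ x, κ x s ∂μ = μ' s
    have h1 : μ' s = γ (Prod.snd ⁻¹' s) := by
      rw [← hc.2, Measure.map_apply measurable_snd hs]
    rw [h1, ← hγ, Measure.compProd_apply (measurable_snd hs)]
    rfl
  have hcoup2 : (lam.map F).map Prod.snd = ν := by
    rw [Measure.map_map measurable_snd hF]
    have hcomp : (Prod.snd ∘ F)
        = fun p : Torus d × (Torus d × Ed d) => p.1 - qmap p.2.2 := rfl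
    rw [hcomp]
    have hG : Measurable (fun p : Torus d × (Torus d × Ed d) => p.1 - qmap p.2.2) :=
      measurable_fst.sub (measurable_qmap.comp measurable_snd.snd)
    ext s hs
    rw [Measure.map_apply hG hs, Measure.compProd_apply (hG hs)]
    have hpre : ∀ x : Torus d,
        (Prod.mk x ⁻¹' ((fun p : Torus d × (Torus d × Ed d) => p.1 - qmap p.2.2) ⁻¹' s))
          = (Set.univ : Set (Torus d)) ×ˢ {z : Ed d | x - qmap z ∈ s} := by
      intro x; ext q; simp [Set.mem_prod]
    simp only [hpre, Kernel.prod_apply, Measure.prod_prod, measure_univ, one_mul]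
    have hset : MeasurableSet {p : Torus d × Ed d | p.1 - qmap p.2 ∈ s} :=
      (measurable_fst.sub (measurable_qmap.comp measurable_snd)) hs
    have key : (μ ⊗ₘ ψ) {p : Torus d × Ed d | p.1 - qmap p.2 ∈ s} = γo (Prod.snd ⁻¹' s) := by
      rw [← hdis, Measure.map_apply hg hset]
      congr 1
      ext p
      simp only [Set.mem_preimage, Set.mem_setOf_eq, qmap_tdiff, sub_sub_cancel]
    rw [Measure.compProd_apply hset] at key
    have hpre2 : ∀ x : Torus d,
        (Prod.mk x ⁻¹' {p : Torus d × Ed d | p.1 - qmap p.2 ∈ s})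
          = {z : Ed d | x - qmap z ∈ s} := fun x => rfl
    simp only [hpre2] at key
    rw [key, ← hco.2, Measure.map_apply measurable_snd hs]

  have hcoup : IsCoupling (lam.map F) μ' ν := ⟨hcoup1, hcoup2⟩
  haveI : IsProbabilityMeasure lam := by rw [hlam]; infer_instance
  have hdR : (0:ℝ) ≤ d := Nat.cast_nonneg d
  have hsq : Real.sqrt d * Real.sqrt d = d := Real.mul_self_sqrt hdR
  -- the three integrands on `lam`
  set f1 : Torus d × (Torus d × Ed d) → ℝ := fun p => ‖tdiff p.2.1 p.1‖^2 with hf1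
  set f2 : Torus d × (Torus d × Ed d) → ℝ := fun p => ⟪p.2.2, tdiff p.2.1 p.1⟫ with hf2
  set f3 : Torus d × (Torus d × Ed d) → ℝ := fun p => ‖p.2.2‖^2 with hf3
  have m1 : Measurable f1 :=
    ((measurable_tdiff.comp (measurable_snd.fst.prodMk measurable_fst)).norm).pow_const 2
  have m2 : Measurable f2 :=
    (measurable_snd.snd).inner (measurable_tdiff.comp (measurable_snd.fst.prodMk measurable_fst))
  have m3 : Measurable f3 := (measurable_snd.snd.norm).pow_const 2
  have mq : Measurable (fun q : Torus d × Torus d => ‖tdiff q.2 q.1‖^2) :=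
    ((measurable_tdiff.comp (measurable_snd.prodMk measurable_fst)).norm).pow_const 2
  -- a.e. bound on the third coordinate of `lam`
  have hsetz : {z : Ed d | ¬ ‖z‖ ≤ Real.sqrt d} = Bᶜ := by
    ext z; simp [hB, Metric.mem_closedBall, dist_zero_right]
  have hzset : MeasurableSet {p : Torus d × (Torus d × Ed d) | p.2.2 ∈ Bᶜ} :=
    measurable_snd.snd hBm
  have hz0 : lam {p : Torus d × (Torus d × Ed d) | p.2.2 ∈ Bᶜ} = 0 := by
    rw [hlam, Measure.compProd_apply hzset]
    have hpre : ∀ x : Torus d,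
        Prod.mk x ⁻¹' {p : Torus d × (Torus d × Ed d) | p.2.2 ∈ Bᶜ}
          = (Set.univ : Set (Torus d)) ×ˢ Bᶜ := by
      intro x; ext q; simp [Set.mem_prod]
    simp only [hpre, Kernel.prod_apply, Measure.prod_prod, measure_univ, one_mul]
    rw [lintegral_congr_ae (hsupp.mono fun x hx => by rw [hx])]
    simp
  have hz : ∀ᵐ p ∂lam, ‖p.2.2‖ ≤ Real.sqrt d := by
    rw [ae_iff]
    have : {p : Torus d × (Torus d × Ed d) | ¬ ‖p.2.2‖ ≤ Real.sqrt d}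
        = {p : Torus d × (Torus d × Ed d) | p.2.2 ∈ Bᶜ} := by
      ext p; exact Set.ext_iff.mp hsetz p.2.2
    rw [this]; exact hz0
  -- integrability on `lam`
  have hb1 : ∀ p, ‖f1 p‖ ≤ (d:ℝ) := by
    intro p
    rw [Real.norm_eq_abs, abs_of_nonneg (by positivity)]
    exact sq_norm_tdiff_le _ _
  have hint1 : Integrable f1 lam :=
    integrable_of_ae_bound m1.aestronglyMeasurable (Filter.Eventually.of_forall hb1)
  have hint2 : Integrable f2 lam := by
    refine integrable_of_ae_bound (C := (d:ℝ)) m2.aestronglyMeasurable (hz.mono fun p hp => ?_)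
    rw [Real.norm_eq_abs]
    calc |⟪p.2.2, tdiff p.2.1 p.1⟫| ≤ ‖p.2.2‖ * ‖tdiff p.2.1 p.1‖ := abs_real_inner_le_norm _ _
      _ ≤ Real.sqrt d * Real.sqrt d := by
          apply mul_le_mul hp (norm_tdiff_le _ _) (norm_nonneg _) (Real.sqrt_nonneg _)
      _ = d := hsq
  have hint3 : Integrable f3 lam := by
    refine integrable_of_ae_bound (C := (d:ℝ)) m3.aestronglyMeasurable (hz.mono fun p hp => ?_)
    rw [Real.norm_eq_abs, abs_of_nonneg (by positivity)]
    calc ‖p.2.2‖^2 ≤ Real.sqrt d * Real.sqrt d := by nlinarith [norm_nonneg p.2.2]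
      _ = d := hsq
  have hintg : Integrable (fun p => ‖tdiff (F p).2 (F p).1‖^2) lam := by
    refine integrable_of_ae_bound (C := (d:ℝ))
      (((measurable_tdiff.comp (hF.snd.prodMk hF.fst)).norm.pow_const 2).aestronglyMeasurable)
      (Filter.Eventually.of_forall fun p => ?_)
    rw [Real.norm_eq_abs, abs_of_nonneg (by positivity)]
    exact sq_norm_tdiff_le _ _
  -- the cost of the glued coupling
  have hcost_map : cost2 (lam.map F) = ∫ p, ‖tdiff (F p).2 (F p).1‖^2 ∂lam := by
    simp only [cost2]
    exact integral_map hF.aemeasurable (mq.aestronglyMeasurable)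
  have hkey : ∀ p : Torus d × (Torus d × Ed d),
      ‖tdiff (F p).2 (F p).1‖^2 ≤ f1 p + (2 * f2 p + f3 p) := by
    intro p
    have := key_ineq p.1 p.2.1 p.2.2
    simp only [hf1, hf2, hf3]
    calc ‖tdiff (F p).2 (F p).1‖^2 = ‖tdiff (p.1 - qmap p.2.2) p.2.1‖^2 := rfl
      _ ≤ _ := by linarith
  have hle : cost2 (lam.map F) ≤ ∫ p, (f1 p + (2 * f2 p + f3 p)) ∂lam := by
    rw [hcost_map]
    exact integral_mono hintg (hint1.add ((hint2.const_mul 2).add hint3)) hkey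
  have hsplit : ∫ p, (f1 p + (2 * f2 p + f3 p)) ∂lam
      = (∫ p, f1 p ∂lam) + (2 * (∫ p, f2 p ∂lam) + ∫ p, f3 p ∂lam) := by
    have h2' : Integrable (fun p => 2 * f2 p + f3 p) lam := (hint2.const_mul 2).add hint3
    rw [integral_add hint1 h2', integral_add (hint2.const_mul 2) hint3, MeasureTheory.integral_const_mul]
  -- identity 1 : ∫ f1 = cost2 γ
  have hintc : Integrable (fun q : Torus d × Torus d => ‖tdiff q.2 q.1‖^2) (μ ⊗ₘ κ) := by
    refine integrable_of_ae_bound (C := (d:ℝ)) mq.aestronglyMeasurable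
      (Filter.Eventually.of_forall fun q => ?_)
    rw [Real.norm_eq_abs, abs_of_nonneg (by positivity)]
    exact sq_norm_tdiff_le _ _
  have hI1 : ∫ p, f1 p ∂lam = cost2 γ := by
    rw [hlam, Measure.integral_compProd (hlam ▸ hint1)]
    have heq : ∀ x : Torus d, ∫ q, f1 (x, q) ∂((κ ×ₖ ψ) x) = ∫ y, ‖tdiff y x‖^2 ∂(κ x) := by
      intro x
      rw [Kernel.prod_apply]
      exact integral_prod_fst (κ x) (ψ x)
        (((measurable_tdiff.comp (measurable_id.prodMk measurable_const)).norm.pow_const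
          2).stronglyMeasurable)
    rw [integral_congr_ae (Filter.Eventually.of_forall heq)]
    have hcg : cost2 γ = ∫ q, ‖tdiff q.2 q.1‖^2 ∂(μ ⊗ₘ κ) := by
      simp only [cost2]; rw [hγ]
    rw [hcg, Measure.integral_compProd hintc]
  -- identity 3 : ∫ f3 = cost2 γo
  have hS : MeasurableSet {p : Torus d × Ed d | p.2 ∈ Bᶜ} := measurable_snd hBm
  have hz0' : (μ ⊗ₘ ψ) {p : Torus d × Ed d | p.2 ∈ Bᶜ} = 0 := by
    rw [Measure.compProd_apply hS]
    have hpre : ∀ x : Torus d, (Prod.mk x ⁻¹' {p : Torus d × Ed d | p.2 ∈ Bᶜ}) = Bᶜ :=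
      fun x => rfl
    simp only [hpre]
    rw [lintegral_congr_ae (hsupp.mono fun x hx => by rw [hx])]
    simp
  have hz' : ∀ᵐ p : Torus d × Ed d ∂(μ ⊗ₘ ψ), ‖p.2‖ ≤ Real.sqrt d := by
    rw [ae_iff]
    have : {p : Torus d × Ed d | ¬ ‖p.2‖ ≤ Real.sqrt d}
        = {p : Torus d × Ed d | p.2 ∈ Bᶜ} := by
      ext p; exact Set.ext_iff.mp hsetz p.2
    rw [this]; exact hz0'
  have hintψ : Integrable (fun p : Torus d × Ed d => ‖p.2‖^2) (μ ⊗ₘ ψ) := by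
    refine integrable_of_ae_bound (C := (d:ℝ)) (measurable_snd.norm.pow_const 2).aestronglyMeasurable
      (hz'.mono fun p hp => ?_)
    rw [Real.norm_eq_abs, abs_of_nonneg (by positivity)]
    calc ‖p.2‖^2 ≤ Real.sqrt d * Real.sqrt d := by nlinarith [norm_nonneg p.2]
      _ = d := hsq
  have hI3 : ∫ p, f3 p ∂lam = cost2 γo := by
    rw [hlam, Measure.integral_compProd (hlam ▸ hint3)]
    have heq : ∀ x : Torus d, ∫ q, f3 (x, q) ∂((κ ×ₖ ψ) x) = ∫ z, ‖z‖^2 ∂(ψ x) := by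
      intro x
      rw [Kernel.prod_apply]
      exact integral_prod_snd (κ x) (ψ x) ((measurable_norm.pow_const 2).stronglyMeasurable)
    rw [integral_congr_ae (Filter.Eventually.of_forall heq)]
    have h1 : cost2 γo = ∫ p, ‖tdiff p.1 p.2‖^2 ∂γo := by
      simp only [cost2]
      exact integral_congr_ae (Filter.Eventually.of_forall fun p => by
        simp only []
        rw [norm_tdiff_symm])
    have h2 : ∫ p : Torus d × Ed d, ‖p.2‖^2 ∂(μ ⊗ₘ ψ) = ∫ p, ‖tdiff p.1 p.2‖^2 ∂γo := by
      rw [← hdis]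
      exact integral_map hg.aemeasurable
        (measurable_snd.norm.pow_const 2).aestronglyMeasurable
    rw [h1, ← h2, Measure.integral_compProd hintψ]
  -- identity 2 : ∫ f2 = pairing ψ γ
  have hψγ : ∀ᵐ p : Torus d × Torus d ∂γ, ψ p.1 Bᶜ = 0 := by
    have hms : MeasurableSet {x : Torus d | ψ x Bᶜ = 0} :=
      (ψ.measurable_coe hBm) (measurableSet_singleton 0)
    have h' : ∀ᵐ x ∂(γ.map Prod.fst), ψ x Bᶜ = 0 := by rw [hc.1]; exact hsupp
    exact (ae_map_iff measurable_fst.aemeasurable hms).mp h'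
  have mGp : StronglyMeasurable
      (fun p : Torus d × Torus d => ∫ z, ⟪z, tdiff p.2 p.1⟫ ∂(ψ p.1)) := by
    have hfm : StronglyMeasurable (fun q : (Torus d × Torus d) × Ed d => ⟪q.2, tdiff q.1.2 q.1.1⟫) :=
      (measurable_snd.inner
        (measurable_tdiff.comp ((measurable_fst.snd).prodMk (measurable_fst.fst)))).stronglyMeasurable
    have := hfm.integral_kernel_prod_right' (κ := ψ.comap Prod.fst measurable_fst)
    simpa [Kernel.comap_apply] using this
  have hGpbound : ∀ᵐ p ∂γ, ‖∫ z, ⟪z, tdiff p.2 p.1⟫ ∂(ψ p.1)‖ ≤ (d:ℝ) := by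
    filter_upwards [hψγ] with p hp
    have hzb : ∀ᵐ z ∂(ψ p.1), ‖⟪z, tdiff p.2 p.1⟫‖ ≤ (d:ℝ) := by
      have h0 : ∀ᵐ z ∂(ψ p.1), ‖z‖ ≤ Real.sqrt d := by
        rw [ae_iff, hsetz]; exact hp
      filter_upwards [h0] with z hzz
      rw [Real.norm_eq_abs]
      calc |⟪z, tdiff p.2 p.1⟫| ≤ ‖z‖ * ‖tdiff p.2 p.1‖ := abs_real_inner_le_norm _ _
        _ ≤ Real.sqrt d * Real.sqrt d :=
            mul_le_mul hzz (norm_tdiff_le _ _) (norm_nonneg _) (Real.sqrt_nonneg _)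
        _ = d := hsq
    calc ‖∫ z, ⟪z, tdiff p.2 p.1⟫ ∂(ψ p.1)‖ ≤ (d:ℝ) * ((ψ p.1) Set.univ).toReal :=
        norm_integral_le_of_norm_le_const hzb
      _ = d := by simp
  have hintGp : Integrable (fun p : Torus d × Torus d => ∫ z, ⟪z, tdiff p.2 p.1⟫ ∂(ψ p.1)) γ :=
    integrable_of_ae_bound mGp.aestronglyMeasurable hGpbound
  have hI2 : ∫ p, f2 p ∂lam = pairing ψ γ := by
    have hint2' : Integrable f2 (μ ⊗ₘ (κ ×ₖ ψ)) := hlam ▸ hint2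
    have hsec : ∀ᵐ x ∂μ, Integrable (fun q => f2 (x, q)) ((κ ×ₖ ψ) x) :=
      ((Measure.integrable_compProd_iff hint2'.aestronglyMeasurable).mp hint2').1
    rw [hlam, Measure.integral_compProd hint2']
    have heq : ∀ᵐ x ∂μ, ∫ q, f2 (x, q) ∂((κ ×ₖ ψ) x)
        = ∫ y, (∫ z, ⟪z, tdiff y x⟫ ∂(ψ x)) ∂(κ x) := by
      filter_upwards [hsec] with x hx
      rw [Kernel.prod_apply] at hx ⊢
      exact MeasureTheory.integral_prod (fun q : Torus d × Ed d => ⟪q.2, tdiff q.1 x⟫) hx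
    rw [integral_congr_ae heq]
    have hpg : pairing ψ γ
        = ∫ x, ∫ y, (∫ z, ⟪z, tdiff y x⟫ ∂(ψ x)) ∂(κ x) ∂μ := by
      simp only [pairing]
      rw [← hγ]
      exact Measure.integral_compProd (hγ.symm ▸ hintGp)
    rw [hpg]
  -- conclusion
  have hW : W2sq μ' ν ≤ cost2 (lam.map F) := by
    apply csInf_le
    · refine ⟨0, ?_⟩
      rintro c ⟨γ'', _, rfl⟩
      exact cost2_nonneg γ''
    · exact ⟨lam.map F, hcoup, rfl⟩
  calc W2sq μ' ν ≤ cost2 (lam.map F) := hW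
    _ ≤ (∫ p, f1 p ∂lam) + (2 * (∫ p, f2 p ∂lam) + ∫ p, f3 p ∂lam) := by
        rw [← hsplit]; exact hle
    _ = cost2 γ + (2 * pairing ψ γ + cost2 γo) := by rw [hI1, hI2, hI3]
    _ = cost2 γ + 2 * pairing ψ γ + cost2 γo := by ring

end Main


/-- Super-differentiability of the squared Wasserstein distance:
if `γ°` is an optimal coupling between `μ` and `ν` and `ψ` is the disintegration of
`(π₁, π₁ - π₂)_# γ°` with respect to its first marginal `μ`, then
(a) for every `μ'` and every coupling `γ ∈ Π(μ,μ')`,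
`W₂²(μ',ν) - W₂²(μ,ν) ≤ 2 ∫∫ z·(y-x) ψ(x,dz) γ(dx,dy) + ∫ |y-x|² γ(dx,dy)`, and
(b) `ψ ∈ ∂⁺Φ(μ)` where `Φ(μ') = ½ W₂²(μ',ν)`. -/
theorem statement0 {d : ℕ} (μ ν : PT d) (γo : Measure (Torus d × Torus d))
    (hopt : IsOptCoupling γo (μ : Measure (Torus d)) (ν : Measure (Torus d)))
    (ψ : Kernel (Torus d) (Ed d)) [IsMarkovKernel ψ]
    (hdis : γo.map (fun p : Torus d × Torus d => (p.1, tdiff p.1 p.2))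
      = (μ : Measure (Torus d)) ⊗ₘ ψ) :
    (∀ (μ' : PT d) (γ : Measure (Torus d × Torus d)),
      IsCoupling γ (μ : Measure (Torus d)) (μ' : Measure (Torus d)) →
      W2sq (μ' : Measure (Torus d)) (ν : Measure (Torus d))
          - W2sq (μ : Measure (Torus d)) (ν : Measure (Torus d))
        ≤ 2 * pairing ψ γ + cost2 γ) ∧
    SuperDiff (fun m : PT d => W2sq (m : Measure (Torus d)) (ν : Measure (Torus d)) / 2) μ ψ := by
  haveI : IsProbabilityMeasure γo := isProbabilityMeasure_of_coupling hopt.1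
  have hsupp := ae_supp (μ : Measure (Torus d)) γo ψ hdis
  have ha : ∀ (μ' : PT d) (γ : Measure (Torus d × Torus d)),
      IsCoupling γ (μ : Measure (Torus d)) (μ' : Measure (Torus d)) →
      W2sq (μ' : Measure (Torus d)) (ν : Measure (Torus d))
          - W2sq (μ : Measure (Torus d)) (ν : Measure (Torus d))
        ≤ 2 * pairing ψ γ + cost2 γ := by
    intro μ' γ hcγ
    haveI : IsProbabilityMeasure γ := isProbabilityMeasure_of_coupling hcγ
    have h := parta (μ : Measure (Torus d)) (ν : Measure (Torus d)) (μ' : Measure (Torus d))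
      γo γ hopt.1 hcγ ψ hdis
    rw [hopt.2] at h
    linarith
  refine ⟨ha, ⟨Real.sqrt d + 1, by positivity, ?_⟩, ?_⟩
  · filter_upwards [hsupp] with x hx
    refine measure_mono_null ?_ hx
    apply Set.compl_subset_compl.mpr
    exact Metric.closedBall_subset_closedBall (by linarith)
  · intro ε hε
    refine ⟨2*ε, by linarith, ?_⟩
    intro μ' γ hcγ hδ
    have h := ha μ' γ hcγ
    have h0 : 0 ≤ cost2 γ := cost2_nonneg γ
    have hs : Real.sqrt (cost2 γ) ≤ 2*ε := by
      have h' := Real.sqrt_le_sqrt hδ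
      rwa [Real.sqrt_sq (by linarith)] at h'
    have hss : Real.sqrt (cost2 γ) * Real.sqrt (cost2 γ) = cost2 γ := Real.mul_self_sqrt h0
    have hnn := Real.sqrt_nonneg (cost2 γ)
    simp only []
    nlinarith [h]
end
end

section
/- Let C, β > 0 and let F : R^d×R^d → R^d satisfy |F(x,p) − F(x',p')| ≤ C(|x−x'| + |p−p'|) for all x,x',p,p' ∈ R^d, and ⟨F(x,p) − F(x,q), p−q⟩ ≤ −β|p−q|² for all x,p,q ∈ R^d. Then there exists s₀ > 0 depending only on C and β such that for every s ∈ (0,s₀] and every x, y, x', y' ∈ R^d with ⟨x−x', y−y'⟩ ≥ 0: if x + sF(x, x−y) = x' + sF(x', x'−y'), then x = x' and y = y'. -/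
open scoped RealInnerProductSpace

noncomputable section

private lemma statement13_aux (C β s g U : ℝ) (hC : 0 < C) (hβ : 0 < β) (hs : 0 < s)
    (hs1 : s * (2*C) ≤ 1) (hs2 : 12 * C^2 * s ≤ β) (hg : 0 ≤ g) (hU : 0 ≤ U)
    (hGle : g ≤ C * (s * g + U)) (hkey : β * U^2 ≤ s * g^2 + C * (s*g) * U) :
    U = 0 ∧ g = 0 := by
  have hg0 : g ≤ 2 * C * U := by nlinarith
  have h1 : g^2 ≤ (2*C*U)^2 := by nlinarith
  have h2 : s*g^2 ≤ s*(2*C*U)^2 := by nlinarith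
  have h3 : C*(s*g)*U ≤ C*s*(2*C*U)*U := by
    nlinarith [mul_nonneg (mul_nonneg hC.le hs.le) hU]
  have h4 : β * U^2 ≤ 6*s*C^2*U^2 := by nlinarith
  have h5 : 6*s*C^2 ≤ β/2 := by nlinarith
  have hU2 : U^2 ≤ 0 := by nlinarith [mul_le_mul_of_nonneg_right h5 (sq_nonneg U)]
  have hU0 : U = 0 := (pow_eq_zero_iff two_ne_zero).mp (le_antisymm hU2 (sq_nonneg U))
  refine ⟨hU0, ?_⟩
  rw [hU0] at hg0
  linarith

/-- For `F : ℝ^d × ℝ^d → ℝ^d` which is `C`-Lipschitz and such that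
`p ↦ -F(x,p)` is `β`-strongly monotone, there is `s₀ > 0` depending only on `C` and `β` such
that for every `s ∈ (0,s₀]` and all `x, y, x', y'` with `⟨x-x', y-y'⟩ ≥ 0`, the equality
`x + sF(x, x-y) = x' + sF(x', x'-y')` forces `x = x'` and `y = y'`. -/
theorem statement13 (C β : ℝ) (hC : 0 < C) (hβ : 0 < β) :
    ∃ s₀ > (0:ℝ), ∀ (d : ℕ)
      (F : EuclideanSpace ℝ (Fin d) → EuclideanSpace ℝ (Fin d) → EuclideanSpace ℝ (Fin d)),
      (∀ x x' p p' : EuclideanSpace ℝ (Fin d),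
        ‖F x p - F x' p'‖ ≤ C * (‖x - x'‖ + ‖p - p'‖)) →
      (∀ x p q : EuclideanSpace ℝ (Fin d), ⟪F x p - F x q, p - q⟫ ≤ -β * ‖p - q‖ ^ 2) →
      ∀ s : ℝ, 0 < s → s ≤ s₀ →
      ∀ x y x' y' : EuclideanSpace ℝ (Fin d), 0 ≤ ⟪x - x', y - y'⟫ →
        x + s • F x (x - y) = x' + s • F x' (x' - y') → x = x' ∧ y = y' := by
  refine ⟨min (1/(2*C)) (β/(12*C^2)), by positivity, ?_⟩
  intro d F hLip hMono s hs hs0 x y x' y' hxy heq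
  have hs1 : s ≤ 1/(2*C) := le_trans hs0 (min_le_left _ _)
  have hs2 : s ≤ β/(12*C^2) := le_trans hs0 (min_le_right _ _)
  set G := F x (x - y) - F x' (x' - y') with hG
  set u := (x - y) - (x' - y') with hu
  -- the equation gives x - x' = -(s • G)
  have ha : x - x' = -(s • G) := by
    have h0 : x - x' + s • G = 0 := by
      calc x - x' + s • G = x + s • F x (x - y) - (x' + s • F x' (x' - y')) := by
            rw [hG, smul_sub]; abel
        _ = 0 := sub_eq_zero_of_eq heq
    exact add_eq_zero_iff_eq_neg.mp h0
  have hAnorm : ‖x - x'‖ = s * ‖G‖ := by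
    rw [ha, norm_neg, norm_smul, Real.norm_eq_abs, abs_of_pos hs]
  -- Lipschitz bound on G
  have hGle : ‖G‖ ≤ C * (s * ‖G‖ + ‖u‖) := by
    have := hLip x x' (x - y) (x' - y')
    rw [hAnorm] at this
    exact this
  -- ⟪G, y - y'⟫ ≤ 0
  have hb : ⟪G, y - y'⟫ ≤ 0 := by
    have h1 : (0:ℝ) ≤ -(s * ⟪G, y - y'⟫) := by
      rw [← real_inner_smul_left, ← inner_neg_left, ← ha]; exact hxy
    nlinarith [h1]
  -- ⟪G, x - x'⟫ = -s * ‖G‖²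
  have hGa : ⟪G, x - x'⟫ = -(s * ‖G‖^2) := by
    rw [ha, inner_neg_right, real_inner_smul_right, real_inner_self_eq_norm_sq]
  -- split the inner product
  have hsplit : ⟪G, u⟫ = ⟪F x (x - y) - F x' (x - y), u⟫
      + ⟪F x' (x - y) - F x' (x' - y'), u⟫ := by
    rw [hG, ← inner_add_left]
    congr 1
    abel
  have hM : ⟪F x' (x - y) - F x' (x' - y'), u⟫ ≤ -β * ‖u‖^2 := hMono x' (x - y) (x' - y')
  have hCS : ⟪F x (x - y) - F x' (x - y), u⟫ ≤ C * (s * ‖G‖) * ‖u‖ := by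
    have h1 : ⟪F x (x - y) - F x' (x - y), u⟫ ≤ ‖F x (x - y) - F x' (x - y)‖ * ‖u‖ :=
      real_inner_le_norm _ _
    have h2 : ‖F x (x - y) - F x' (x - y)‖ ≤ C * ‖x - x'‖ := by
      have := hLip x x' (x - y) (x - y)
      simpa using this
    rw [hAnorm] at h2
    nlinarith [norm_nonneg u, h1, h2]
  have hlow : -(s * ‖G‖^2) ≤ ⟪G, u⟫ := by
    have huab : u = (x - x') - (y - y') := by rw [hu]; abel
    rw [huab, inner_sub_right, hGa]
    linarith
  -- combine
  have hkey : β * ‖u‖^2 ≤ s * ‖G‖^2 + C * (s * ‖G‖) * ‖u‖ := by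
    have := hsplit ▸ hlow
    nlinarith [hM, hCS]
  have hs1' : s * (2*C) ≤ 1 := (le_div_iff₀ (show (0:ℝ) < 2*C by positivity)).mp hs1
  have hs2' : 12 * C^2 * s ≤ β := by
    have := (le_div_iff₀ (show (0:ℝ) < 12*C^2 by positivity)).mp hs2
    linarith
  obtain ⟨hU, hg⟩ := statement13_aux C β s ‖G‖ ‖u‖ hC hβ hs hs1' hs2'
    (norm_nonneg G) (norm_nonneg u) hGle hkey
  have hGzero : G = 0 := norm_eq_zero.mp hg
  have hxx : x = x' := by
    have : x - x' = 0 := by rw [ha, hGzero, smul_zero, neg_zero]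
    exact sub_eq_zero.mp this
  refine ⟨hxx, ?_⟩
  have huz : u = 0 := norm_eq_zero.mp hU
  have : y - y' = 0 := by
    have h := huz
    rw [hu, hxx] at h
    have : x' - y - (x' - y') = -(y - y') := by abel
    rw [this] at h
    simpa using neg_eq_zero.mp h
  exact sub_eq_zero.mp this
end
end

section
/- Let T > 0, let W : [0,T] → R^d be continuous and let X₀ ∈ R^d. Then: (a) there is a unique continuously differentiable X : [0,T) → R^d with X(0) = X₀ and X'(t) = (W(t) − X(t))/(T−t) for all t ∈ [0,T); (b) if moreover there are c > 0 and r₀ ∈ (0,1) such that |W(t) − W(T)| ≤ c √(2(T−t) log(1/(T−t))) whenever 0 < T−t ≤ r₀, then X(t) → W(T) as t → T. -/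
/-!
Variation of constants: `d/dt ((T - t)⁻¹ X t) = (T - t)⁻² W t`, so
`X t = (T - t) (X₀ / T + ∫₀ᵗ (T - s)⁻² W s ds)`, where `W` is extended continuously beyond
`[0, T]` because `HasDerivAt` at `0` is two-sided. Two solutions differ by `T - t` times a
constant, which vanishes at `t = 0`. Since `∫₀ᵗ (T - s)⁻² ds = (T - t)⁻¹ - T⁻¹`, the difference
`X t - W T` is the same expression with `W - W T` and `X₀ - W T` in place of `W` and `X₀`; the
weights `(T - t) (T - s)⁻²` on `[0, t]` have mass at most one and concentrate at `s = t` as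
`t → T`, so this tends to zero because `W s → W T`.
-/

open Filter Set Topology intervalIntegral

section

variable {F : Type*} [NormedAddCommGroup F] [NormedSpace ℝ F] {T a b t : ℝ}

lemma hasDerivAt_inv_sub (ht : t < T) :
    HasDerivAt (fun s => (T - s)⁻¹) ((T - t) ^ 2)⁻¹ t := by
  simpa using ((hasDerivAt_id t).const_sub T).fun_inv (sub_ne_zero.2 ht.ne')

lemma integral_inv_sub_sq (ha : a < T) (hb : b < T) :
    ∫ s in a..b, ((T - s) ^ 2)⁻¹ = (T - b)⁻¹ - (T - a)⁻¹ := by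
  have hsub : uIcc a b ⊆ Iio T := ordConnected_Iio.uIcc_subset ha hb
  refine integral_eq_sub_of_hasDerivAt (fun s hs => hasDerivAt_inv_sub (hsub hs)) ?_
  refine ContinuousOn.intervalIntegrable (ContinuousOn.inv₀ (by fun_prop) fun s hs => ?_)
  exact pow_ne_zero _ (sub_ne_zero.2 (hsub hs).ne')

lemma ContinuousOn.inv_sub_sq_smul {V : ℝ → F} {S : Set ℝ} (hV : ContinuousOn V S)
    (hS : S ⊆ Iio T) : ContinuousOn (fun s => ((T - s) ^ 2)⁻¹ • V s) S :=
  (ContinuousOn.inv₀ (by fun_prop) fun s hs => pow_ne_zero _ (sub_ne_zero.2 (hS hs).ne')).smul hV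

lemma intervalIntegrable_inv_sub_sq_smul {V : ℝ → F} (hV : ContinuousOn V (uIcc a b))
    (ha : a < T) (hb : b < T) :
    IntervalIntegrable (fun s => ((T - s) ^ 2)⁻¹ • V s) MeasureTheory.volume a b :=
  (hV.inv_sub_sq_smul (ordConnected_Iio.uIcc_subset ha hb)).intervalIntegrable

lemma norm_integral_inv_sub_sq_smul_le {V : ℝ → F} {ε : ℝ} (hab : a ≤ b) (hb : b < T)
    (hV : ∀ s ∈ Icc a b, ‖V s‖ ≤ ε) :
    ‖∫ s in a..b, ((T - s) ^ 2)⁻¹ • V s‖ ≤ ε * (T - b)⁻¹ := by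
  have ha : a < T := hab.trans_lt hb
  have hε : 0 ≤ ε := (norm_nonneg _).trans (hV a ⟨le_rfl, hab⟩)
  calc ‖∫ s in a..b, ((T - s) ^ 2)⁻¹ • V s‖
      ≤ ∫ s in a..b, ε * ((T - s) ^ 2)⁻¹ := by
        refine norm_integral_le_of_norm_le hab (MeasureTheory.ae_of_all _ fun s hs => ?_) ?_
        · rw [norm_smul, norm_inv, norm_pow, Real.norm_eq_abs, sq_abs, mul_comm]
          gcongr
          exact hV s (Ioc_subset_Icc_self hs)
        · simpa [mul_comm] using intervalIntegrable_inv_sub_sq_smul (V := fun _ => ε)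
            continuousOn_const ha hb
    _ = ε * ((T - b)⁻¹ - (T - a)⁻¹) := by rw [integral_const_mul, integral_inv_sub_sq ha hb]
    _ ≤ ε * (T - b)⁻¹ :=
        mul_le_mul_of_nonneg_left (sub_le_self _ (inv_nonneg.2 (sub_nonneg.2 ha.le))) hε

lemma tendsto_sub_smul_nhdsLT (T : ℝ) (y : F) :
    Tendsto (fun t => (T - t) • y) (𝓝[<] T) (𝓝 0) :=
  (((continuous_const.sub continuous_id).smul continuous_const).tendsto' T 0 (by simp)).mono_left
    nhdsWithin_le_nhds

lemma bridgeODE_solution_unique {W X Y : ℝ → F} (hXY : X a = Y a)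
    (hX : ∀ t ∈ Ico a T, HasDerivAt X ((T - t)⁻¹ • (W t - X t)) t)
    (hY : ∀ t ∈ Ico a T, HasDerivAt Y ((T - t)⁻¹ • (W t - Y t)) t) :
    EqOn X Y (Ico a T) := by
  set h : ℝ → F := fun s => (T - s)⁻¹ • (X s - Y s)
  have hh : ∀ s ∈ Ico a T, HasDerivAt h 0 s := fun s hs => by
    refine ((hasDerivAt_inv_sub hs.2).smul ((hX s hs).sub (hY s hs))).congr_deriv ?_
    simp only [← smul_sub, sub_sub_sub_cancel_left, smul_smul, sq, mul_inv, ← smul_add]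
    simp
  intro t ht
  have hconst := constant_of_has_deriv_right_zero
    (fun s hs => (hh s ⟨hs.1, hs.2.trans_lt ht.2⟩).continuousAt.continuousWithinAt)
    (fun s hs => (hh s ⟨hs.1, hs.2.trans ht.2⟩).hasDerivWithinAt) t ⟨ht.1, le_rfl⟩
  simpa [h, hXY, sub_eq_zero, (sub_pos.2 ht.2).ne'] using hconst

noncomputable def bridgeSolution (T : ℝ) (V : ℝ → F) (x₀ : F) (t : ℝ) : F :=
  (T - t) • (T⁻¹ • x₀ + ∫ s in 0..t, ((T - s) ^ 2)⁻¹ • V s)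

lemma bridgeSolution_zero (hT : T ≠ 0) (V : ℝ → F) (x₀ : F) : bridgeSolution T V x₀ 0 = x₀ := by
  simp [bridgeSolution, smul_smul, hT]

lemma tendsto_sub_smul_integral_inv_sub_sq {V : ℝ → F} (ha : a < T)
    (hV : ContinuousOn V (Ico a T)) (hVT : Tendsto V (𝓝[<] T) (𝓝 0)) :
    Tendsto (fun t => (T - t) • ∫ s in a..t, ((T - s) ^ 2)⁻¹ • V s) (𝓝[<] T) (𝓝 0) := by
  rw [Metric.tendsto_nhds]
  intro ε hε
  obtain ⟨l, hl, hlV⟩ := mem_nhdsLT_iff_exists_Ioo_subset.1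
    (Metric.tendsto_nhds.1 hVT (ε / 2) (half_pos hε))
  obtain ⟨t₁, ht₁, ht₁T⟩ := exists_between (max_lt ha hl)
  have hint : ∀ {b c}, a ≤ b → c < T → b ≤ c →
      IntervalIntegrable (fun s => ((T - s) ^ 2)⁻¹ • V s) MeasureTheory.volume b c :=
    fun hb hc hbc => intervalIntegrable_inv_sub_sq_smul
      (hV.mono (by rw [uIcc_of_le hbc]; exact Icc_subset_Ico hb hc)) (hbc.trans_lt hc) hc
  filter_upwards [Metric.tendsto_nhds.1 (tendsto_sub_smul_nhdsLT T
      (∫ s in a..t₁, ((T - s) ^ 2)⁻¹ • V s)) (ε / 2) (half_pos hε), Ioo_mem_nhdsLT ht₁T]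
    with t hCt ht
  have htT : 0 < T - t := sub_pos.2 ht.2
  have hnear : ‖∫ s in t₁..t, ((T - s) ^ 2)⁻¹ • V s‖ ≤ ε / 2 * (T - t)⁻¹ :=
    norm_integral_inv_sub_sq_smul_le ht.1.le ht.2 fun s hs => by
      have : dist (V s) 0 < ε / 2 :=
        hlV ⟨(le_max_right a l).trans_lt (ht₁.trans_le hs.1), hs.2.trans_lt ht.2⟩
      rw [dist_zero_right] at this
      exact this.le
  rw [dist_zero_right] at hCt ⊢
  rw [← integral_add_adjacent_intervals (hint le_rfl ht₁T (le_max_left a l |>.trans ht₁.le))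
    (hint ((le_max_left a l).trans ht₁.le) ht.2 ht.1.le), smul_add]
  calc ‖(T - t) • (∫ s in a..t₁, ((T - s) ^ 2)⁻¹ • V s)
        + (T - t) • ∫ s in t₁..t, ((T - s) ^ 2)⁻¹ • V s‖
      ≤ ‖(T - t) • ∫ s in a..t₁, ((T - s) ^ 2)⁻¹ • V s‖
        + (T - t) * ‖∫ s in t₁..t, ((T - s) ^ 2)⁻¹ • V s‖ :=
        (norm_add_le _ _).trans_eq
          (by rw [norm_smul _ (∫ s in t₁..t, _), Real.norm_of_nonneg htT.le])
    _ < ε / 2 + (T - t) * (ε / 2 * (T - t)⁻¹) := add_lt_add_of_lt_of_le hCt (by gcongr)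
    _ = ε := by field_simp; ring

variable [CompleteSpace F]

lemma hasDerivAt_bridgeSolution {V : ℝ → F} (hV : Continuous V) (x₀ : F) (hT : 0 < T)
    (ht : t < T) :
    HasDerivAt (bridgeSolution T V x₀) ((T - t)⁻¹ • (V t - bridgeSolution T V x₀ t)) t := by
  have hcont := hV.continuousOn.inv_sub_sq_smul (T := T) subset_rfl
  have hint : HasDerivAt (fun t => ∫ s in 0..t, ((T - s) ^ 2)⁻¹ • V s) (((T - t) ^ 2)⁻¹ • V t) t :=
    integral_hasDerivAt_right (intervalIntegrable_inv_sub_sq_smul hV.continuousOn hT ht)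
      (hcont.stronglyMeasurableAtFilter isOpen_Iio t ht) (hcont.continuousAt (Iio_mem_nhds ht))
  refine (((hasDerivAt_id t).const_sub T).smul (hint.const_add (T⁻¹ • x₀))).congr_deriv ?_
  have hne : T - t ≠ 0 := sub_ne_zero.2 ht.ne'
  rw [bridgeSolution, smul_sub, smul_smul, smul_smul, inv_mul_cancel₀ hne, id,
    show (T - t) * ((T - t) ^ 2)⁻¹ = (T - t)⁻¹ by field_simp]
  module

lemma bridgeSolution_sub_const {V : ℝ → F} (hV : Continuous V) (x₀ c : F) (hT : 0 < T)
    (ht : t < T) :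
    bridgeSolution T V x₀ t - c = bridgeSolution T (fun s => V s - c) (x₀ - c) t := by
  have hI : ∫ s in 0..t, ((T - s) ^ 2)⁻¹ • (V s - c)
      = (∫ s in 0..t, ((T - s) ^ 2)⁻¹ • V s) - ((T - t)⁻¹ - T⁻¹) • c := by
    simp_rw [smul_sub]
    rw [integral_sub (intervalIntegrable_inv_sub_sq_smul hV.continuousOn hT ht)
      (intervalIntegrable_inv_sub_sq_smul continuousOn_const hT ht),
      intervalIntegral.integral_smul_const, integral_inv_sub_sq hT ht, sub_zero]
  have hne : T - t ≠ 0 := sub_ne_zero.2 ht.ne'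
  rw [bridgeSolution, bridgeSolution, hI]
  linear_combination (norm := module) (mul_inv_cancel₀ hne) • c

lemma tendsto_bridgeSolution {V : ℝ → F} (hV : Continuous V) (x₀ : F) (hT : 0 < T) :
    Tendsto (bridgeSolution T V x₀) (𝓝[<] T) (𝓝 (V T)) := by
  rw [← tendsto_sub_nhds_zero_iff]
  have hsplit : ∀ᶠ t in 𝓝[<] T, (T - t) • T⁻¹ • (x₀ - V T)
      + (T - t) • ∫ s in 0..t, ((T - s) ^ 2)⁻¹ • (V s - V T) = bridgeSolution T V x₀ t - V T :=
    eventually_mem_nhdsWithin.mono fun t ht => by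
      rw [bridgeSolution_sub_const hV x₀ (V T) hT ht, bridgeSolution, smul_add]
  refine Tendsto.congr' hsplit ?_
  simpa using (tendsto_sub_smul_nhdsLT T _).add (tendsto_sub_smul_integral_inv_sub_sq hT
    (hV.sub continuous_const).continuousOn
    (tendsto_sub_nhds_zero_iff.2 (hV.continuousAt.tendsto.mono_left nhdsWithin_le_nhds)))

end

/-- Lemma 4.1, deterministic pathwise content. For `W : [0,T] → ℝ^d`
continuous and `X₀ ∈ ℝ^d`:
(a) there is a unique continuously differentiable solution on `[0,T)` of
`X' (t) = (W(t) - X(t))/(T-t)`, `X(0) = X₀`;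
(b) if `W` satisfies the Brownian-type modulus bound
`|W(t) - W(T)| ≤ c √(2(T-t) log(1/(T-t)))` for `T - t` small, then `X(t) → W(T)` as `t → T`. -/
theorem statement14 {d : ℕ} (T : ℝ) (hT : 0 < T)
    (W : ℝ → EuclideanSpace ℝ (Fin d)) (hW : ContinuousOn W (Set.Icc 0 T))
    (X₀ : EuclideanSpace ℝ (Fin d)) :
    ∃ X : ℝ → EuclideanSpace ℝ (Fin d),
      (X 0 = X₀ ∧ ∀ t ∈ Set.Ico (0:ℝ) T, HasDerivAt X ((T - t)⁻¹ • (W t - X t)) t) ∧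
      (∀ Y : ℝ → EuclideanSpace ℝ (Fin d), Y 0 = X₀ →
        (∀ t ∈ Set.Ico (0:ℝ) T, HasDerivAt Y ((T - t)⁻¹ • (W t - Y t)) t) →
        Set.EqOn X Y (Set.Ico 0 T)) ∧
      ((∃ c > (0:ℝ), ∃ r₀ ∈ Set.Ioo (0:ℝ) 1, ∀ t : ℝ, 0 < T - t → T - t ≤ r₀ →
          ‖W t - W T‖ ≤ c * Real.sqrt (2 * (T - t) * Real.log (1 / (T - t)))) →
        Tendsto X (nhdsWithin T (Set.Iio T)) (nhds (W T))) := by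
  set V := fun t => W (projIcc 0 T hT.le t)
  have hV : Continuous V :=
    hW.comp_continuous (continuous_subtype_val.comp continuous_projIcc) fun t => (projIcc 0 T _ t).2
  have hVW : EqOn V W (Icc 0 T) := fun t ht => by simp [V, projIcc_of_mem _ ht]
  have hX : ∀ t ∈ Ico 0 T, HasDerivAt (bridgeSolution T V X₀)
      ((T - t)⁻¹ • (W t - bridgeSolution T V X₀ t)) t := fun t ht => by
    simpa only [hVW (Ico_subset_Icc_self ht)] using hasDerivAt_bridgeSolution hV X₀ hT ht.2
  refine ⟨bridgeSolution T V X₀, ⟨bridgeSolution_zero hT.ne' V X₀, hX⟩,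
    fun Y hY0 hY =>
      bridgeODE_solution_unique ((bridgeSolution_zero hT.ne' V X₀).trans hY0.symm) hX hY,
    fun _ => ?_⟩
  simpa only [hVW (right_mem_Icc.2 hT.le)] using tendsto_bridgeSolution hV X₀ hT
end

section
/- Let T > 0, C > 0, γ > −1, let λ : [0,T] → [0,∞) be continuous with ∫_s^T λ(u)du > 0 for every s < T, and let ω : [0,T) → [0,∞) be measurable. Assume λ(s)ω(s) ≤ C(T−s)^γ and λ(s) ≤ C(T−s)^{−1} ∫_s^T λ(u)du for all s ∈ [0,T). Then there is a constant C' > 0 depending only on C and γ such that for every t ∈ [0,T) and every integer k ≥ 1: ∫_t^T ∫_{t₁}^T ⋯ ∫_{t_{k−1}}^T ω(t_k) · (λ(t_k)/∫_{t_{k−1}}^T λ) ⋯ (λ(t₂)/∫_{t₁}^T λ) · (λ(t₁)/∫_t^T λ) dt_k ⋯ dt₁ ≤ (C')^k (T−t)^{γ+1} / ∫_t^T λ(u)du. -/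
open MeasureTheory Set

noncomputable section

/-- `∫_s^T λ(u) du`. -/
def lamInt (lam : ℝ → ℝ) (T s : ℝ) : ℝ := ∫ u in Set.Ioc s T, lam u

/-- The iterated integral over the ordered jump times: `J lam ω T 0 s = ω s` and
`J lam ω T (k+1) s = ∫_s^T (J lam ω T k u) · λ(u) / (∫_s^T λ) du`, so that for `k ≥ 1`,
`J lam ω T k t = ∫_t^T ∫_{t₁}^T ⋯ ∫_{t_{k-1}}^T ω(t_k) (λ(t_k)/∫_{t_{k-1}}^T λ) ⋯
(λ(t₁)/∫_t^T λ) dt_k ⋯ dt₁`. -/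
def J (lam ω : ℝ → ℝ) (T : ℝ) : ℕ → ℝ → ℝ
  | 0, s => ω s
  | (k+1), s => ∫ u in Set.Ioc s T, J lam ω T k u * (lam u / lamInt lam T s)

/-- Almost every point of `Ioc t T` lies in `Ioo t T`. -/
lemma ae_Ioo_of_Ioc (t T : ℝ) :
    ∀ᵐ u ∂(volume.restrict (Set.Ioc t T)), u ∈ Set.Ioo t T := by
  rw [ae_restrict_iff' measurableSet_Ioc, ae_iff]
  have h : {u : ℝ | ¬ (u ∈ Set.Ioc t T → u ∈ Set.Ioo t T)} ⊆ {T} := by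
    intro u hu
    simp only [Set.mem_setOf_eq, _root_.not_imp] at hu
    simp only [Set.mem_singleton_iff]
    by_contra hne
    exact hu.2 ⟨hu.1.1, lt_of_le_of_ne hu.1.2 hne⟩
  exact measure_mono_null h Real.volume_singleton

lemma rpow_integrableOn {T t γ : ℝ} (ht : t ≤ T) (hγ : -1 < γ) :
    IntegrableOn (fun u => (T - u) ^ γ) (Set.Ioc t T) := by
  have h1 : IntervalIntegrable (fun x : ℝ => x ^ γ) volume 0 (T - t) :=
    intervalIntegral.intervalIntegrable_rpow' hγ
  have h2 := h1.comp_sub_left T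
  simp only [sub_zero, sub_sub_cancel] at h2
  exact (intervalIntegrable_iff_integrableOn_Ioc_of_le ht).mp h2.symm

lemma rpow_integral_eval {T t γ : ℝ} (ht : t ≤ T) (hγ : -1 < γ) :
    ∫ u in Set.Ioc t T, (T - u) ^ γ = (T - t) ^ (γ + 1) / (γ + 1) := by
  have h1 : (∫ u in t..T, (T - u) ^ γ) = ∫ x in (T - T)..(T - t), x ^ γ :=
    intervalIntegral.integral_comp_sub_left (fun x : ℝ => x ^ γ) T
  rw [← intervalIntegral.integral_of_le ht, h1, sub_self,
    integral_rpow (Or.inl hγ), Real.zero_rpow (by linarith), sub_zero]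

/-- Key integral estimate: if `0 ≤ f ≤ K (T-u)^γ` a.e. on `(t, T]`, then
`∫_t^T f ≤ K (T-t)^{γ+1}/(γ+1)`. -/
lemma key_bound {T t γ K : ℝ} (ht : t ≤ T) (hγ : -1 < γ) (f : ℝ → ℝ)
    (h0 : ∀ᵐ u ∂(volume.restrict (Set.Ioc t T)), 0 ≤ f u)
    (hle : ∀ᵐ u ∂(volume.restrict (Set.Ioc t T)), f u ≤ K * (T - u) ^ γ) :
    (∫ u in Set.Ioc t T, f u) ≤ K * (T - t) ^ (γ + 1) / (γ + 1) := by
  have hint : IntegrableOn (fun u => K * (T - u) ^ γ) (Set.Ioc t T) :=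
    (rpow_integrableOn ht hγ).const_mul K
  have h := integral_mono_of_nonneg h0 hint hle
  calc (∫ u in Set.Ioc t T, f u) ≤ ∫ u in Set.Ioc t T, K * (T - u) ^ γ := h
    _ = K * ∫ u in Set.Ioc t T, (T - u) ^ γ := by rw [integral_const_mul]
    _ = K * ((T - t) ^ (γ + 1) / (γ + 1)) := by rw [rpow_integral_eval ht hγ]
    _ = K * (T - t) ^ (γ + 1) / (γ + 1) := by ring

lemma J_nonneg (lam ω : ℝ → ℝ) (T : ℝ)
    (hlam : ∀ s ∈ Set.Icc (0:ℝ) T, 0 ≤ lam s)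
    (hli : ∀ s : ℝ, 0 ≤ s → s < T → 0 < lamInt lam T s)
    (hω : ∀ s : ℝ, 0 ≤ s → s < T → 0 ≤ ω s) :
    ∀ k : ℕ, ∀ s : ℝ, 0 ≤ s → s < T → 0 ≤ J lam ω T k s := by
  intro k
  induction k with
  | zero => intro s hs hsT; exact hω s hs hsT
  | succ k ih =>
    intro s hs hsT
    show 0 ≤ ∫ u in Set.Ioc s T, J lam ω T k u * (lam u / lamInt lam T s)
    refine integral_nonneg_of_ae ?_
    filter_upwards [ae_Ioo_of_Ioc s T] with u hu
    have h1 : 0 ≤ J lam ω T k u := ih u (hs.trans hu.1.le) hu.2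
    have h2 : 0 ≤ lam u := hlam u ⟨hs.trans hu.1.le, hu.2.le⟩
    have h3 : 0 < lamInt lam T s := hli s hs hsT
    positivity

/-- the key iterated-integral estimate in Proposition 4.1. There is a
constant `C' > 0`, depending only on `C` and `γ`, bounding the iterated integral over the
ordered jump times by `(C')^k (T-t)^{γ+1} / ∫_t^T λ`. -/
theorem statement17 (C γ : ℝ) (hC : 0 < C) (hγ : -1 < γ) :
    ∃ C' > (0:ℝ), ∀ T : ℝ, 0 < T → ∀ lam ω : ℝ → ℝ,
      ContinuousOn lam (Set.Icc 0 T) →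
      (∀ s ∈ Set.Icc (0:ℝ) T, 0 ≤ lam s) →
      (∀ s : ℝ, 0 ≤ s → s < T → 0 < lamInt lam T s) →
      Measurable ω →
      (∀ s : ℝ, 0 ≤ s → s < T → 0 ≤ ω s) →
      (∀ s : ℝ, 0 ≤ s → s < T → lam s * ω s ≤ C * (T - s) ^ γ) →
      (∀ s : ℝ, 0 ≤ s → s < T → lam s ≤ C * (T - s)⁻¹ * lamInt lam T s) →
      ∀ t : ℝ, 0 ≤ t → t < T → ∀ k : ℕ, 1 ≤ k →
        J lam ω T k t ≤ C' ^ k * (T - t) ^ (γ + 1) / lamInt lam T t := by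
  have hγ1 : (0:ℝ) < γ + 1 := by linarith
  refine ⟨C / (γ + 1), div_pos hC hγ1, ?_⟩
  intro T hT lam ω hcont hlam hli hωm hω hCω hClam t ht htT k hk
  -- main induction, with `t` quantified inside
  have main : ∀ k : ℕ, 1 ≤ k → ∀ t : ℝ, 0 ≤ t → t < T →
      J lam ω T k t ≤ (C / (γ + 1)) ^ k * (T - t) ^ (γ + 1) / lamInt lam T t := by
    intro k hk
    induction k, hk using Nat.le_induction with
    | base =>
      intro t ht htT
      have hlt : 0 < lamInt lam T t := hli t ht htT
      have hb : J lam ω T 1 t ≤ (C / lamInt lam T t) * (T - t) ^ (γ + 1) / (γ + 1) := by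
        refine key_bound htT.le hγ _ ?_ ?_
        · filter_upwards [ae_Ioo_of_Ioc t T] with u hu
          have h0u : 0 ≤ u := ht.trans hu.1.le
          have h1 : 0 ≤ J lam ω T 0 u := hω u h0u hu.2
          have h2 : 0 ≤ lam u := hlam u ⟨h0u, hu.2.le⟩
          positivity
        · filter_upwards [ae_Ioo_of_Ioc t T] with u hu
          have h0u : 0 ≤ u := ht.trans hu.1.le
          have h1 : lam u * ω u ≤ C * (T - u) ^ γ := hCω u h0u hu.2
          have : J lam ω T 0 u * (lam u / lamInt lam T t)
              = (lam u * ω u) / lamInt lam T t := by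
            show ω u * (lam u / lamInt lam T t) = _; ring
          rw [this]
          rw [div_le_iff₀ hlt]
          calc lam u * ω u ≤ C * (T - u) ^ γ := h1
            _ = C / lamInt lam T t * (T - u) ^ γ * lamInt lam T t := by
                field_simp
      calc J lam ω T 1 t ≤ (C / lamInt lam T t) * (T - t) ^ (γ + 1) / (γ + 1) := hb
        _ = (C / (γ + 1)) ^ 1 * (T - t) ^ (γ + 1) / lamInt lam T t := by
            rw [pow_one]; ring
    | succ k hk ih =>
      intro t ht htT
      have hlt : 0 < lamInt lam T t := hli t ht htT
      have hKnn : 0 ≤ (C / (γ + 1)) ^ k * C / lamInt lam T t := by positivity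
      have hb : J lam ω T (k+1) t
          ≤ ((C / (γ + 1)) ^ k * C / lamInt lam T t) * (T - t) ^ (γ + 1) / (γ + 1) := by
        refine key_bound htT.le hγ _ ?_ ?_
        · filter_upwards [ae_Ioo_of_Ioc t T] with u hu
          have h0u : 0 ≤ u := ht.trans hu.1.le
          have h1 : 0 ≤ J lam ω T k u := J_nonneg lam ω T hlam hli hω k u h0u hu.2
          have h2 : 0 ≤ lam u := hlam u ⟨h0u, hu.2.le⟩
          positivity
        · filter_upwards [ae_Ioo_of_Ioc t T] with u hu
          have h0u : 0 ≤ u := ht.trans hu.1.le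
          have hTu : 0 < T - u := by linarith [hu.2]
          have hltu : 0 < lamInt lam T u := hli u h0u hu.2
          have h2 : 0 ≤ lam u := hlam u ⟨h0u, hu.2.le⟩
          have hJ : J lam ω T k u
              ≤ (C / (γ + 1)) ^ k * (T - u) ^ (γ + 1) / lamInt lam T u :=
            ih u h0u hu.2
          have hJnn : 0 ≤ J lam ω T k u := J_nonneg lam ω T hlam hli hω k u h0u hu.2
          have hlb : lam u ≤ C * (T - u)⁻¹ * lamInt lam T u := hClam u h0u hu.2
          have step1 : J lam ω T k u * (lam u / lamInt lam T t)
              ≤ ((C / (γ + 1)) ^ k * (T - u) ^ (γ + 1) / lamInt lam T u)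
                * ((C * (T - u)⁻¹ * lamInt lam T u) / lamInt lam T t) := by
            have hf2 : lam u / lamInt lam T t
                ≤ (C * (T - u)⁻¹ * lamInt lam T u) / lamInt lam T t := by
              gcongr
            have hB : 0 ≤ (C / (γ + 1)) ^ k * (T - u) ^ (γ + 1) / lamInt lam T u := by
              positivity
            exact mul_le_mul hJ hf2 (by positivity) hB
          have step2 : ((C / (γ + 1)) ^ k * (T - u) ^ (γ + 1) / lamInt lam T u)
                * ((C * (T - u)⁻¹ * lamInt lam T u) / lamInt lam T t)
              = ((C / (γ + 1)) ^ k * C / lamInt lam T t)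
                * ((T - u) ^ (γ + 1) * (T - u)⁻¹) := by
            field_simp
          have step3 : (T - u) ^ (γ + 1) * (T - u)⁻¹ = (T - u) ^ γ := by
            rw [Real.rpow_add_one hTu.ne' γ]
            field_simp
          calc J lam ω T k u * (lam u / lamInt lam T t)
              ≤ ((C / (γ + 1)) ^ k * (T - u) ^ (γ + 1) / lamInt lam T u)
                * ((C * (T - u)⁻¹ * lamInt lam T u) / lamInt lam T t) := step1
            _ = ((C / (γ + 1)) ^ k * C / lamInt lam T t) * (T - u) ^ γ := by
                rw [step2, step3]
      calc J lam ω T (k+1) t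
          ≤ ((C / (γ + 1)) ^ k * C / lamInt lam T t) * (T - t) ^ (γ + 1) / (γ + 1) := hb
        _ = (C / (γ + 1)) ^ (k+1) * (T - t) ^ (γ + 1) / lamInt lam T t := by
            rw [pow_succ]; ring
  exact main k hk t ht htT
end
end
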